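/- Let D be a complete, cocomplete, extremally co-well-powered, (extremal epi, mono) category. For an iso-filtered object (X, Q) of KD, the projective filtration on the KD-object (X, Q) generated by the KD-morphisms (X,Q) → Δ(X_δ) induced by the elements δ ∈ Q (where Δ : D → KD is the discrete filtration functor and X_δ is the target of δ) is a reduced iso-filtration in KD; the resulting canonical filtration functor κ : KD → K(KD) is both a right inverse and a right adjoint to the forgetful functor K(KD) → KD. -/

import Mathlib

open CategoryTheory CategoryTheory.Limits

universe w v u v₂ u₂

namespace FilteredCats

variable {D : Type u} [Category.{v} D]

/-- The class of morphisms of `D` with source `X`. -/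
def MorFrom (X : D) : Type (max u v) := Σ Y : D, X ⟶ Y

/-- `Dom δ₁ δ₂` means `δ₁ ≥ δ₂`: there is `h` with `h ∘ δ₁ = δ₂`. -/
def Dom {X : D} (δ₁ δ₂ : MorFrom X) : Prop :=
  ∃ h : δ₁.1 ⟶ δ₂.1, δ₁.2 ≫ h = δ₂.2

/-- A projective filtration on `X`: a nonempty, directed, saturated class of
morphisms with source `X`. -/
structure ProjFilt (X : D) where
  carrier : Set (MorFrom X)
  nonempty' : carrier.Nonempty
  directed' : ∀ δ₁ ∈ carrier, ∀ δ₂ ∈ carrier, ∃ δ ∈ carrier, Dom δ δ₁ ∧ Dom δ δ₂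
  saturated' : ∀ δ₁ ∈ carrier, ∀ δ₂, Dom δ₁ δ₂ → δ₂ ∈ carrier

/-- The pull back of a set of morphisms with source `X` along `f : X' ⟶ X`. -/
def pullSet {X' X : D} (f : X' ⟶ X) (S : Set (MorFrom X)) : Set (MorFrom X') :=
  {δ' | ∃ δ ∈ S, δ' = ⟨δ.1, f ≫ δ.2⟩}

/-- The pull back of a projective filtration along `f : X' ⟶ X`. -/
def ProjFilt.pull {X' X : D} (f : X' ⟶ X) (P : ProjFilt X) : ProjFilt X' where
  carrier := pullSet f P.carrier
  nonempty' := by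
    obtain ⟨δ, hδ⟩ := P.nonempty'
    exact ⟨⟨δ.1, f ≫ δ.2⟩, δ, hδ, rfl⟩
  directed' := by
    rintro _ ⟨δ₁, h₁, rfl⟩ _ ⟨δ₂, h₂, rfl⟩
    obtain ⟨δ, hδ, ⟨g₁, hg₁⟩, ⟨g₂, hg₂⟩⟩ := P.directed' δ₁ h₁ δ₂ h₂
    exact ⟨⟨δ.1, f ≫ δ.2⟩, ⟨δ, hδ, rfl⟩,
      ⟨g₁, by simp [hg₁]⟩, ⟨g₂, by simp [hg₂]⟩⟩
  saturated' := by
    rintro _ ⟨δ, hδ, rfl⟩ δ₂ ⟨h, hh⟩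
    refine ⟨⟨δ₂.1, δ.2 ≫ h⟩, P.saturated' δ hδ _ ⟨h, rfl⟩, ?_⟩
    obtain ⟨Y₂, g₂⟩ := δ₂
    have hg : g₂ = f ≫ (δ.2 ≫ h) := by simpa using hh.symm
    exact Sigma.ext rfl (heq_of_eq hg)

/-- A projectively filtered object of `D`. -/
structure PObj (D : Type u) [Category.{v} D] where
  base : D
  filt : ProjFilt base

/-- A morphism of projectively filtered objects: a morphism of the underlying
objects such that the pull back of the target filtration is contained in the
source filtration. -/
structure PHom (A B : PObj D) : Type v where
  toHom : A.base ⟶ B.base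
  mem : ∀ δ ∈ B.filt.carrier, (⟨δ.1, toHom ≫ δ.2⟩ : MorFrom A.base) ∈ A.filt.carrier

theorem PHom.ext' {A B : PObj D} {f g : PHom A B} (h : f.toHom = g.toHom) : f = g := by
  cases f; cases g; cases h; rfl

instance : Category.{v} (PObj D) where
  Hom := PHom
  id A := ⟨𝟙 A.base, fun δ hδ => by rw [Category.id_comp]; exact hδ⟩
  comp {A B C} f g := ⟨f.toHom ≫ g.toHom, fun δ hδ => by
    have h1 := g.mem δ hδ
    have h2 := f.mem _ h1
    simpa using h2⟩
  id_comp f := PHom.ext' (Category.id_comp _)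
  comp_id f := PHom.ext' (Category.comp_id _)
  assoc f g h := PHom.ext' (Category.assoc _ _ _)

@[simp] theorem PObj.id_toHom (A : PObj D) : PHom.toHom (𝟙 A) = 𝟙 A.base := rfl
@[simp] theorem PObj.comp_toHom {A B C : PObj D} (f : A ⟶ B) (g : B ⟶ C) :
    PHom.toHom (f ≫ g) = PHom.toHom f ≫ PHom.toHom g := rfl

/-- The forgetful functor `PD → D`. -/
def Pforget (D : Type u) [Category.{v} D] : PObj D ⥤ D where
  obj A := A.base
  map f := PHom.toHom f

/-- The discrete filtration functor `D → PD`, `X ↦ (X, M(X))`. -/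
def Pdiscrete (D : Type u) [Category.{v} D] : D ⥤ PObj D where
  obj X :=
    { base := X
      filt :=
        { carrier := Set.univ
          nonempty' := ⟨⟨X, 𝟙 X⟩, trivial⟩
          directed' := fun δ₁ _ δ₂ _ =>
            ⟨⟨X, 𝟙 X⟩, trivial, ⟨δ₁.2, Category.id_comp _⟩, ⟨δ₂.2, Category.id_comp _⟩⟩
          saturated' := fun _ _ _ _ => trivial } }
  map f := ⟨f, fun _ _ => trivial⟩

/-- The functor `PD → PE` induced by a functor `G : D → E`. -/
def Pfunctor {E : Type u₂} [Category.{v₂} E] (G : D ⥤ E) : PObj D ⥤ PObj E where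
  obj A :=
    { base := G.obj A.base
      filt :=
        { carrier := {δ' | ∃ δ ∈ A.filt.carrier,
            Dom (⟨G.obj δ.1, G.map δ.2⟩ : MorFrom (G.obj A.base)) δ'}
          nonempty' := by
            obtain ⟨δ, hδ⟩ := A.filt.nonempty'
            exact ⟨⟨G.obj δ.1, G.map δ.2⟩, δ, hδ, ⟨𝟙 _, Category.comp_id _⟩⟩
          directed' := by
            rintro δ'₁ ⟨δ₁, h₁, g₁, hg₁⟩ δ'₂ ⟨δ₂, h₂, g₂, hg₂⟩
            obtain ⟨δ, hδ, ⟨k₁, hk₁⟩, ⟨k₂, hk₂⟩⟩ := A.filt.directed' δ₁ h₁ δ₂ h₂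
            refine ⟨⟨G.obj δ.1, G.map δ.2⟩, ⟨δ, hδ, ⟨𝟙 _, Category.comp_id _⟩⟩,
              ⟨G.map k₁ ≫ g₁, ?_⟩, ⟨G.map k₂ ≫ g₂, ?_⟩⟩
            · rw [← Category.assoc, ← G.map_comp, hk₁, hg₁]
            · rw [← Category.assoc, ← G.map_comp, hk₂, hg₂]
          saturated' := by
            rintro δ'₁ ⟨δ, hδ, g, hg⟩ δ'₂ ⟨h, hh⟩
            exact ⟨δ, hδ, ⟨g ≫ h, by rw [← Category.assoc, hg, hh]⟩⟩ } }
  map {A B} f :=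
    ⟨G.map (PHom.toHom f), by
      rintro δ' ⟨δ, hδ, g, hg⟩
      exact ⟨⟨δ.1, PHom.toHom f ≫ δ.2⟩, f.mem δ hδ,
        ⟨g, by rw [← hg, ← Category.assoc, ← G.map_comp]⟩⟩⟩
  map_id A := PHom.ext' (G.map_id _)
  map_comp f g := PHom.ext' (G.map_comp _ _)

/-- An extremal epimorphism: an epimorphism such that in any factorisation
through a monomorphism, the monomorphism is an isomorphism. -/
def ExtremalEpi {C : Type u₂} [Category.{v₂} C] {X Y : C} (e : X ⟶ Y) : Prop :=
  Epi e ∧ ∀ ⦃Z : C⦄ (g : X ⟶ Z) (m : Z ⟶ Y), Mono m → g ≫ m = e → IsIso m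

/-- An (extremal epi, mono) category: every morphism factors as an extremal
epimorphism followed by a monomorphism and such factorisations have the
diagonal fill-in property. -/
structure EMCat (C : Type u₂) [Category.{v₂} C] : Prop where
  fact : ∀ {X Y : C} (f : X ⟶ Y), ∃ (Z : C) (e : X ⟶ Z) (m : Z ⟶ Y),
    ExtremalEpi e ∧ Mono m ∧ e ≫ m = f
  diag : ∀ {A B Z X : C} (e : A ⟶ B) (m : Z ⟶ X) (g : A ⟶ Z) (h : B ⟶ X),
    ExtremalEpi e → Mono m → g ≫ m = e ≫ h → ∃ d : B ⟶ Z, e ≫ d = g ∧ d ≫ m = h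

/-- A projective filtration is reduced if it has an initial subclass of
extremal epimorphisms. -/
def ProjFilt.Reduced {X : D} (P : ProjFilt X) : Prop :=
  ∀ δ ∈ P.carrier, ∃ ε ∈ P.carrier, ExtremalEpi ε.2 ∧ Dom ε δ

/-- The category of reduced projectively filtered objects of `D`. -/
def QObj (D : Type u) [Category.{v} D] := ObjectProperty.FullSubcategory (fun A : PObj D => A.filt.Reduced)

instance : Category.{v} (QObj D) := ObjectProperty.FullSubcategory.category _

/-- The inclusion functor `QD → PD`. -/
def qpInclusion (D : Type u) [Category.{v} D] : QObj D ⥤ PObj D :=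
  ObjectProperty.ι _

/-- A category is extremally co-well-powered if every object has, up to
isomorphism, only a (small) set of extremal epimorphisms out of it. -/
def ECWP (C : Type u₂) [Category.{v₂} C] : Prop :=
  ∀ X : C, ∃ (ι : Type v₂) (Y : ι → C) (e : ∀ i, X ⟶ Y i),
    (∀ i, ExtremalEpi (e i)) ∧
    ∀ ⦃Z : C⦄ (f : X ⟶ Z), ExtremalEpi f → ∃ (i : ι) (φ : Y i ≅ Z), e i ≫ φ.hom = f

/-- The category `(P, D)` associated to a projective filtration: objects are the
elements of `P`, morphisms `δ₁ → δ₂` are morphisms `g` of `D` with `g ∘ δ₁ = δ₂`. -/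
def FiltCat {X : D} (P : ProjFilt X) : Type (max u v) := {δ : MorFrom X // δ ∈ P.carrier}

instance {X : D} (P : ProjFilt X) : Category.{v} (FiltCat P) where
  Hom δ₁ δ₂ := {g : δ₁.1.1 ⟶ δ₂.1.1 // δ₁.1.2 ≫ g = δ₂.1.2}
  id δ := ⟨𝟙 _, Category.comp_id _⟩
  comp f g := ⟨f.1 ≫ g.1, by rw [← Category.assoc, f.2, g.2]⟩
  id_comp f := Subtype.ext (Category.id_comp _)
  comp_id f := Subtype.ext (Category.comp_id _)
  assoc f g h := Subtype.ext (Category.assoc _ _ _)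

/-- The functor `(P, D) → D` sending an element of the filtration to its target. -/
def FiltDiagram {X : D} (P : ProjFilt X) : FiltCat P ⥤ D where
  obj δ := δ.1.1
  map g := g.1

/-- The canonical cone on the diagram of a projective filtration, with apex the
underlying object. -/
def filtCone {X : D} (P : ProjFilt X) : Limits.Cone (FiltDiagram P) where
  pt := X
  π :=
    { app := fun δ => δ.1.2
      naturality := fun δ₁ δ₂ g => by
        have := g.2
        dsimp [FiltDiagram] at *
        simp [this] }

/-- A reduced projective filtration is an iso-filtration if the canonical cone
on its diagram is a limit cone, i.e. the limit exists and the canonical morphism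
from the underlying object to it is an isomorphism. -/
def IsoFilt {X : D} (P : ProjFilt X) : Prop :=
  Nonempty (Limits.IsLimit (filtCone P))

/-- The category of iso-filtered objects of `D`. -/
def KObj (D : Type u) [Category.{v} D] :=
  ObjectProperty.FullSubcategory (fun A : QObj D => IsoFilt A.obj.filt)

instance : Category.{v} (KObj D) := ObjectProperty.FullSubcategory.category _

/-- The inclusion functor `KD → QD`. -/
def kqInclusion (D : Type u) [Category.{v} D] : KObj D ⥤ QObj D :=
  ObjectProperty.ι _

/-- The forgetful functor `KD → D`. -/
def Kforget (D : Type u) [Category.{v} D] : KObj D ⥤ D :=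
  kqInclusion D ⋙ qpInclusion D ⋙ Pforget D

/-- The smallest projective filtration containing a class of morphisms
(as a class). -/
def genSet {X : D} (S : Set (MorFrom X)) : Set (MorFrom X) :=
  {δ | ∀ P : ProjFilt X, S ⊆ P.carrier → δ ∈ P.carrier}

/-- The reduction of a class of morphisms: the saturation of the class of
extremal epimorphism parts of (extremal epi, mono)-factorisations of its
elements. -/
def redSet {X : D} (S : Set (MorFrom X)) : Set (MorFrom X) :=
  {δ | ∃ ε : MorFrom X, ExtremalEpi ε.2 ∧
    (∃ δ' ∈ S, ∃ m : ε.1 ⟶ δ'.1, Mono m ∧ ε.2 ≫ m = δ'.2) ∧ Dom ε δ}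

/-- The push forward of a filtration class along `f` (single morphism case). -/
def pushSet {X Y : D} (f : X ⟶ Y) (S : Set (MorFrom X)) : Set (MorFrom Y) :=
  {g | (⟨g.1, f ≫ g.2⟩ : MorFrom X) ∈ S}

/-- The discrete filtration on an object, as an iso-filtered object. -/
def kDiscreteObj (X : D) : KObj D where
  obj :=
    { obj := (Pdiscrete D).obj X
      property := fun δ _ => ⟨⟨X, 𝟙 X⟩, trivial,
        ⟨(inferInstance : Epi (𝟙 X)), fun _ g m hm hgm => by
          haveI : IsSplitEpi m := ⟨⟨⟨g, hgm⟩⟩⟩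
          exact isIso_of_mono_of_isSplitEpi m⟩,
        ⟨δ.2, Category.id_comp _⟩⟩ }
  property := ⟨{
    lift := fun c => c.π.app ⟨⟨X, 𝟙 X⟩, trivial⟩
    fac := fun c j => by
      have h := c.π.naturality (X := ⟨⟨X, 𝟙 X⟩, trivial⟩) (Y := j)
        ⟨j.1.2, Category.id_comp _⟩
      dsimp [FiltDiagram, filtCone] at h ⊢
      exact h.symm.trans (Category.id_comp _)
    uniq := fun c m hm => by
      have h := hm ⟨⟨X, 𝟙 X⟩, trivial⟩
      rw [← Category.comp_id m]
      exact h }⟩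

/-- The discrete filtration functor `D → KD`. -/
def kDiscrete (D : Type u) [Category.{v} D] : D ⥤ KObj D where
  obj X := kDiscreteObj X
  map f := ⟨⟨⟨f, fun _ _ => trivial⟩⟩⟩
  map_id _ := InducedCategory.hom_ext (InducedCategory.hom_ext (PHom.ext' rfl))
  map_comp _ _ := InducedCategory.hom_ext (InducedCategory.hom_ext (PHom.ext' rfl))

/-- The morphism in `KD` from an iso-filtered object to the discrete object on
the target of an element of its filtration. -/
def kToDiscrete {A : KObj D} (δ : MorFrom A.obj.obj.base)
    (hδ : δ ∈ A.obj.obj.filt.carrier) : A ⟶ kDiscreteObj δ.1 :=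
  ⟨⟨(⟨δ.2, fun γ _ => A.obj.obj.filt.saturated' δ hδ _ ⟨γ.2, rfl⟩⟩ :
    PHom A.obj.obj ((kDiscreteObj δ.1).obj.obj))⟩⟩

/-- The natural transformation `P(G) → P(H)` induced by `ν : G → H`. -/
def Pnat {E : Type u₂} [Category.{v₂} E] {G H : D ⥤ E} (ν : G ⟶ H) :
    Pfunctor G ⟶ Pfunctor H where
  app A :=
    ⟨ν.app A.base, by
      rintro δ' ⟨δ, hδ, g, hg⟩
      exact ⟨δ, hδ, ⟨ν.app δ.1 ≫ g, by
        rw [← Category.assoc, ν.naturality, Category.assoc, hg]; rfl⟩⟩⟩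
  naturality {A B} f := PHom.ext' (ν.naturality (PHom.toHom f))


/-- The class of `KD`-morphisms from an iso-filtered object `A` to discrete
objects induced by the elements of its filtration. -/
def canonClass (A : KObj D) : Set (MorFrom A) :=
  {μ | ∃ (δ : MorFrom A.obj.obj.base) (hδ : δ ∈ A.obj.obj.filt.carrier),
    μ = ⟨kDiscreteObj δ.1, kToDiscrete δ hδ⟩}

/-- The saturation of `canonClass A`: the canonical filtration on the
`KD`-object `A`. -/
def canonSat (A : KObj D) : Set (MorFrom A) :=
  {μ | ∃ ν ∈ canonClass A, Dom ν μ}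


/-!
The canonical filtration of `A = (X, Q)` is reduced because `Δ` turns the extremal epimorphisms
of `Q` into extremal epimorphisms of `KD`, and it is an iso-filtration because a cone over it is,
on underlying objects, a cone over `Q`. The substance is the adjunction: every reduced
iso-filtration `R` of a `KD`-object `B = (X, Q)` contains every morphism `B → Δ Y`.

For this, `R` induces on `X` the class `Q_R ⊆ Q` of those `γ` for which `B → Δ γ.1` lies in `R`.
It is an iso-filtration (its limit is computed in two stages, first in each target of `R`, then
over `R`, using that the forgetful functor `KD → D` is right adjoint to `Δ`), and it is reduced
because an extremal epimorphism `ρ : B → C` of `KD`, composed with suitable elements of the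
filtration of `C`, becomes an extremal epimorphism of `D`. The latter follows by factoring
`ρ ≫ σ = e ≫ m` and observing that `ρ` factors through the pullback of `σ` along `m`, which
carries a natural iso-filtration and whose projection to `C` is a monomorphism, hence an
isomorphism. Finally `(X, Q_R)` is a cone over `R` whose comparison map to the limit `B` is the
identity of `X`, so `Q ⊆ Q_R`.
-/

-- Lets `rw` see through the sigma type `MorFrom` and the diagram and cone of a filtration.
attribute [reducible] MorFrom FiltDiagram filtCone

theorem Dom.refl {X : D} (δ : MorFrom X) : Dom δ δ :=
  ⟨𝟙 _, Category.comp_id _⟩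

theorem Dom.trans {X : D} {δ₁ δ₂ δ₃ : MorFrom X} : Dom δ₁ δ₂ → Dom δ₂ δ₃ → Dom δ₁ δ₃
  | ⟨h, hh⟩, ⟨k, hk⟩ => ⟨h ≫ k, by rw [← Category.assoc, hh, hk]⟩

theorem ProjFilt.mem_of_dom {X : D} (P : ProjFilt X) {δ₁ δ₂ : MorFrom X}
    (h₁ : δ₁ ∈ P.carrier) (h : Dom δ₁ δ₂) : δ₂ ∈ P.carrier :=
  P.saturated' δ₁ h₁ δ₂ h

theorem ProjFilt.mem_of_eq {X Y : D} (P : ProjFilt X) {f g : X ⟶ Y}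
    (hf : (⟨Y, f⟩ : MorFrom X) ∈ P.carrier) (h : f = g) : (⟨Y, g⟩ : MorFrom X) ∈ P.carrier := by
  subst h
  exact hf

theorem ProjFilt.prodLift_mem [HasBinaryProducts D] {X Y₁ Y₂ : D} (P : ProjFilt X)
    {f₁ : X ⟶ Y₁} {f₂ : X ⟶ Y₂} (h₁ : (⟨Y₁, f₁⟩ : MorFrom X) ∈ P.carrier)
    (h₂ : (⟨Y₂, f₂⟩ : MorFrom X) ∈ P.carrier) :
    (⟨Y₁ ⨯ Y₂, prod.lift f₁ f₂⟩ : MorFrom X) ∈ P.carrier := by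
  obtain ⟨δ, hδ, ⟨k₁, hk₁⟩, ⟨k₂, hk₂⟩⟩ := P.directed' _ h₁ _ h₂
  exact P.mem_of_dom hδ ⟨prod.lift k₁ k₂, by ext <;> simp [hk₁, hk₂]⟩

namespace KObj

abbrev base (A : KObj D) : D := A.obj.obj.base

abbrev filt (A : KObj D) : ProjFilt A.base := A.obj.obj.filt

def hom {A B : KObj D} (f : A ⟶ B) : A.base ⟶ B.base := f.hom.hom.toHom

theorem hom_mem {A B : KObj D} (f : A ⟶ B) {δ : MorFrom B.base} (hδ : δ ∈ B.filt.carrier) :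
    (⟨δ.1, hom f ≫ δ.2⟩ : MorFrom A.base) ∈ A.filt.carrier :=
  f.hom.hom.mem δ hδ

theorem hom_ext {A B : KObj D} {f g : A ⟶ B} (h : hom f = hom g) : f = g :=
  InducedCategory.hom_ext (InducedCategory.hom_ext (PHom.ext' h))

def homMk {A B : KObj D} (f : A.base ⟶ B.base)
    (hf : ∀ δ ∈ B.filt.carrier, (⟨δ.1, f ≫ δ.2⟩ : MorFrom A.base) ∈ A.filt.carrier) :
    A ⟶ B :=
  ⟨⟨⟨f, hf⟩⟩⟩

@[simp] theorem hom_comp {A B C : KObj D} (f : A ⟶ B) (g : B ⟶ C) :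
    hom (f ≫ g) = hom f ≫ hom g := rfl

theorem mono_of_mono_hom {A B : KObj D} (f : A ⟶ B) (hf : Mono (hom f)) : Mono f :=
  ⟨fun _ _ h => hom_ext ((cancel_mono (hom f)).1 (congrArg hom h))⟩

def ofDiscrete {Z : D} {B : KObj D} (g : Z ⟶ B.base) : kDiscreteObj Z ⟶ B :=
  homMk g fun _ _ => trivial

theorem mem_of_toDiscrete {B : KObj D} {Y : D} (f : B ⟶ kDiscreteObj Y) :
    (⟨Y, hom f⟩ : MorFrom B.base) ∈ B.filt.carrier :=
  B.filt.mem_of_dom (hom_mem f (δ := ⟨Y, 𝟙 Y⟩) trivial)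
    ⟨𝟙 Y, (Category.comp_id _).trans (Category.comp_id _)⟩

end KObj

open KObj

def discreteAdjunction : kDiscrete D ⊣ Kforget D :=
  Adjunction.mkOfHomEquiv
    { homEquiv := fun _ _ =>
        { toFun := hom
          invFun := ofDiscrete
          left_inv := fun _ => hom_ext rfl
          right_inv := fun _ => rfl }
      homEquiv_naturality_left_symm := fun _ _ => hom_ext rfl
      homEquiv_naturality_right := fun _ _ => rfl }

noncomputable def isLimitMapConeKforget {B : KObj D} {R : ProjFilt B}
    (hR : IsLimit (filtCone R)) : IsLimit ((Kforget D).mapCone (filtCone R)) :=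
  have := (discreteAdjunction (D := D)).rightAdjoint_preservesLimits
  isLimitOfPreserves (Kforget D) hR

theorem dom_kToDiscrete {A : KObj D} {δ δ' : MorFrom A.base} (hδ : δ ∈ A.filt.carrier)
    (hδ' : δ' ∈ A.filt.carrier) (h : Dom δ δ') :
    Dom (⟨_, kToDiscrete δ hδ⟩ : MorFrom A) ⟨_, kToDiscrete δ' hδ'⟩ :=
  let ⟨g, hg⟩ := h
  ⟨ofDiscrete g, hom_ext hg⟩

theorem kToDiscrete_extremalEpi {A : KObj D} {δ : MorFrom A.base} (hδ : δ ∈ A.filt.carrier)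
    (hext : ExtremalEpi δ.2) : ExtremalEpi (kToDiscrete δ hδ) := by
  refine ⟨⟨fun u v huv => hom_ext (hext.1.left_cancellation _ _ (congrArg hom huv))⟩,
    fun Z g m hm hgm => ?_⟩
  have : Mono (hom m) :=
    ⟨fun u v huv => congrArg hom (hm.right_cancellation (ofDiscrete u) (ofDiscrete v)
      (hom_ext huv))⟩
  obtain ⟨i, hi₁, hi₂⟩ := (hext.2 (hom g) (hom m) this (congrArg hom hgm)).out
  exact ⟨⟨ofDiscrete i, hom_ext hi₁, hom_ext hi₂⟩⟩

abbrev FiltCat.mk {X : D} {P : ProjFilt X} (δ : MorFrom X) (hδ : δ ∈ P.carrier) : FiltCat P :=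
  ⟨δ, hδ⟩

theorem cone_π_comp {X : D} {P : ProjFilt X} (s : Cone (FiltDiagram P)) {δ δ' : MorFrom X}
    (hδ : δ ∈ P.carrier) (hδ' : δ' ∈ P.carrier) (g : δ.1 ⟶ δ'.1) (hg : δ.2 ≫ g = δ'.2) :
    s.π.app (.mk δ hδ) ≫ g = s.π.app (.mk δ' hδ') :=
  s.w (show FiltCat.mk δ hδ ⟶ FiltCat.mk δ' hδ' from ⟨g, hg⟩)

theorem cone_π_congr {X Y : D} {P : ProjFilt X} (s : Cone (FiltDiagram P)) {f g : X ⟶ Y}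
    (hf : (⟨Y, f⟩ : MorFrom X) ∈ P.carrier) (hg : (⟨Y, g⟩ : MorFrom X) ∈ P.carrier)
    (h : f = g) : s.π.app (.mk _ hf) = s.π.app (.mk _ hg) := by
  subst h
  rfl

theorem EMCat.dom_of_dom_comp_mono (hEM : EMCat D) {X Z W : D} {e : X ⟶ Z}
    (he : ExtremalEpi e) {δ : MorFrom X} {g : X ⟶ W} {m : W ⟶ δ.1} (hm : Mono m)
    (hgm : g ≫ m = δ.2) (h : Dom ⟨Z, e⟩ δ) : Dom (⟨Z, e⟩ : MorFrom X) ⟨W, g⟩ :=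
  let ⟨k, hk⟩ := h
  let ⟨d, hd, _⟩ := hEM.diag e m g k he hm (hgm.trans hk.symm)
  ⟨d, hd⟩

theorem ProjFilt.Reduced.mem_of_comp_mono (hEM : EMCat D) {X : D} {P : ProjFilt X}
    (hP : P.Reduced) {δ : MorFrom X} (hδ : δ ∈ P.carrier) {W : D} {g : X ⟶ W}
    {m : W ⟶ δ.1} (hm : Mono m) (hgm : g ≫ m = δ.2) : (⟨W, g⟩ : MorFrom X) ∈ P.carrier :=
  let ⟨_, hε, hext, hεδ⟩ := hP δ hδ
  P.mem_of_dom hε (hEM.dom_of_dom_comp_mono hext hm hgm hεδ)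

def DomDirected {X : D} (S : Set (MorFrom X)) : Prop :=
  ∀ δ₁ ∈ S, ∀ δ₂ ∈ S, ∃ δ ∈ S, Dom δ δ₁ ∧ Dom δ δ₂

theorem mem_redSet_of_mem (hEM : EMCat D) {X : D} {S : Set (MorFrom X)} {δ : MorFrom X}
    (hδ : δ ∈ S) : δ ∈ redSet S :=
  let ⟨Z, e, m, he, hm, hem⟩ := hEM.fact δ.2
  ⟨⟨Z, e⟩, he, ⟨δ, hδ, m, hm, hem⟩, ⟨m, hem⟩⟩

theorem redSet_directed (hEM : EMCat D) {X : D} {S : Set (MorFrom X)} (hS : DomDirected S) :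
    ∀ r₁ ∈ redSet S, ∀ r₂ ∈ redSet S, ∃ r ∈ redSet S, Dom r r₁ ∧ Dom r r₂ := by
  rintro r₁ ⟨ε₁, -, ⟨δ₁, hδ₁, m₁, hm₁, hεm₁⟩, hεr₁⟩ r₂ ⟨ε₂, -, ⟨δ₂, hδ₂, m₂, hm₂, hεm₂⟩, hεr₂⟩
  obtain ⟨δ, hδ, hδ₁', hδ₂'⟩ := hS δ₁ hδ₁ δ₂ hδ₂
  obtain ⟨Z, e, m, he, hm, hem⟩ := hEM.fact δ.2
  have hdom : Dom (⟨Z, e⟩ : MorFrom X) δ := ⟨m, hem⟩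
  exact ⟨⟨Z, e⟩, ⟨⟨Z, e⟩, he, ⟨δ, hδ, m, hm, hem⟩, Dom.refl _⟩,
    (hEM.dom_of_dom_comp_mono he hm₁ hεm₁ (hdom.trans hδ₁')).trans hεr₁,
    (hEM.dom_of_dom_comp_mono he hm₂ hεm₂ (hdom.trans hδ₂')).trans hεr₂⟩

def redFilt (hEM : EMCat D) {X : D} (S : Set (MorFrom X)) (hne : S.Nonempty)
    (hS : DomDirected S) : ProjFilt X where
  carrier := redSet S
  nonempty' := let ⟨_, hδ⟩ := hne; ⟨_, mem_redSet_of_mem hEM hδ⟩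
  directed' := redSet_directed hEM hS
  saturated' := fun _ ⟨ε, he, hεS, hd⟩ _ h => ⟨ε, he, hεS, hd.trans h⟩

section redFilt

variable (hEM : EMCat D) {X : D} {S : Set (MorFrom X)} {hne : S.Nonempty} {hS : DomDirected S}

theorem redFilt_reduced : (redFilt hEM S hne hS).Reduced :=
  fun _ ⟨ε, he, hεS, hd⟩ => ⟨ε, ⟨ε, he, hεS, Dom.refl ε⟩, he, hd⟩

include hEM in
theorem ProjFilt.Reduced.comp_mem_of_mem_redSet {B : D} {P : ProjFilt B} (hP : P.Reduced)
    {ℓ : B ⟶ X} (hℓ : ∀ δ ∈ S, (⟨δ.1, ℓ ≫ δ.2⟩ : MorFrom B) ∈ P.carrier) {r : MorFrom X}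
    (hr : r ∈ redSet S) : (⟨r.1, ℓ ≫ r.2⟩ : MorFrom B) ∈ P.carrier := by
  obtain ⟨ε, -, ⟨δ, hδ, m, hm, hεm⟩, h, hh⟩ := hr
  have hε : (⟨ε.1, ℓ ≫ ε.2⟩ : MorFrom B) ∈ P.carrier :=
    hP.mem_of_comp_mono hEM (hℓ δ hδ) hm (by rw [Category.assoc, hεm])
  exact P.mem_of_dom hε ⟨h, by rw [Category.assoc, hh]⟩

/-- An element of the reduction is reached from a generator by cancelling the monomorphism of its
(extremal epi, mono)-factorisation. -/
theorem redFilt_fac (s : Cone (FiltDiagram (redFilt hEM S hne hS))) {l : s.pt ⟶ X}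
    (hl : ∀ δ (hδ : δ ∈ S), l ≫ δ.2 = s.π.app (.mk δ (mem_redSet_of_mem hEM hδ)))
    (j : FiltCat (redFilt hEM S hne hS)) : l ≫ j.1.2 = s.π.app j := by
  obtain ⟨ε, hext, ⟨δ, hδ, m, hm, hεm⟩, h, hh⟩ := j.2
  have hεP : ε ∈ redSet S := ⟨ε, hext, ⟨δ, hδ, m, hm, hεm⟩, Dom.refl ε⟩
  have hε : l ≫ ε.2 = s.π.app (.mk ε hεP) := by
    rw [← cancel_mono m, Category.assoc, hεm, hl δ hδ,
      cone_π_comp s hεP (mem_redSet_of_mem hEM hδ) m hεm]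
  rw [← hh, ← Category.assoc, hε]
  exact cone_π_comp s hεP j.2 h hh

end redFilt

noncomputable section Pullback

variable [HasPullbacks D] [HasBinaryProducts D] {X V : D}

abbrev pullbackGen (σ : MorFrom X) (m : V ⟶ σ.1) (δ : MorFrom X) : MorFrom (pullback σ.2 m) :=
  ⟨δ.1 ⨯ V, prod.lift (pullback.fst σ.2 m ≫ δ.2) (pullback.snd σ.2 m)⟩

def pullbackGens (Q : ProjFilt X) (σ : MorFrom X) (m : V ⟶ σ.1) :
    Set (MorFrom (pullback σ.2 m)) :=
  {r | ∃ δ ∈ Q.carrier, Dom δ σ ∧ r = pullbackGen σ m δ}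

variable {Q : ProjFilt X} {σ : MorFrom X} (m : V ⟶ σ.1)

theorem pullbackGen_comp_map {δ δ' : MorFrom X} {g : δ.1 ⟶ δ'.1} (hg : δ.2 ≫ g = δ'.2) :
    (pullbackGen σ m δ).2 ≫ prod.map g (𝟙 V) = (pullbackGen σ m δ').2 := by
  ext <;> simp [← hg]

theorem pullbackGen_dom {δ δ' : MorFrom X} (h : Dom δ δ') :
    Dom (pullbackGen σ m δ) (pullbackGen σ m δ') :=
  let ⟨_, hg⟩ := h
  ⟨_, pullbackGen_comp_map m hg⟩

theorem pullbackGens_domDirected : DomDirected (pullbackGens Q σ m) := by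
  rintro _ ⟨δ₁, hδ₁, hσ₁, rfl⟩ _ ⟨δ₂, hδ₂, -, rfl⟩
  obtain ⟨δ, hδ, h₁, h₂⟩ := Q.directed' δ₁ hδ₁ δ₂ hδ₂
  exact ⟨_, ⟨δ, hδ, h₁.trans hσ₁, rfl⟩, pullbackGen_dom m h₁, pullbackGen_dom m h₂⟩

/-- The factor `V` of the generators is what makes the limit of this filtration the pullback
rather than `X`. -/
def pullbackFilt (hEM : EMCat D) (hσ : σ ∈ Q.carrier) : ProjFilt (pullback σ.2 m) :=
  redFilt hEM (pullbackGens Q σ m) ⟨_, σ, hσ, Dom.refl σ, rfl⟩ (pullbackGens_domDirected m)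

variable (hEM : EMCat D) (hσ : σ ∈ Q.carrier)

theorem pullbackFilt_reduced : (pullbackFilt m hEM hσ).Reduced :=
  redFilt_reduced hEM

theorem pullbackGen_mem {δ : MorFrom X} (hδ : δ ∈ Q.carrier) (hδσ : Dom δ σ) :
    pullbackGen σ m δ ∈ (pullbackFilt m hEM hσ).carrier :=
  mem_redSet_of_mem hEM ⟨δ, hδ, hδσ, rfl⟩

theorem fst_comp_mem_pullbackFilt {δ : MorFrom X} (hδ : δ ∈ Q.carrier) :
    (⟨δ.1, pullback.fst σ.2 m ≫ δ.2⟩ : MorFrom (pullback σ.2 m)) ∈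
      (pullbackFilt m hEM hσ).carrier := by
  obtain ⟨δ', hδ', ⟨g, hg⟩, hδ'σ⟩ := Q.directed' δ hδ σ hσ
  exact (pullbackFilt m hEM hσ).mem_of_dom (pullbackGen_mem m hEM hσ hδ' hδ'σ)
    ⟨prod.fst ≫ g, by
      show prod.lift _ _ ≫ prod.fst ≫ g = _
      rw [prod.lift_fst_assoc, Category.assoc, hg]⟩

variable {m hEM hσ}

abbrev pullbackFiltCone (s : Cone (FiltDiagram (pullbackFilt m hEM hσ))) :
    Cone (FiltDiagram Q) where
  pt := s.pt
  π.app δ := s.π.app (.mk _ (fst_comp_mem_pullbackFilt m hEM hσ δ.2))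
  π.naturality δ δ' g := by
    simpa using (cone_π_comp s (fst_comp_mem_pullbackFilt m hEM hσ δ.2)
      (fst_comp_mem_pullbackFilt m hEM hσ δ'.2) g.1 (by simp [← g.2])).symm

variable (hQ : IsLimit (filtCone Q)) (s : Cone (FiltDiagram (pullbackFilt m hEM hσ)))

def pullbackFiltLift : s.pt ⟶ pullback σ.2 m :=
  pullback.lift (hQ.lift (pullbackFiltCone s))
    (s.π.app (.mk _ (pullbackGen_mem m hEM hσ hσ (Dom.refl σ))) ≫ prod.snd) (by
      rw [Category.assoc]
      exact (hQ.fac _ ⟨σ, hσ⟩).trans (cone_π_comp s (pullbackGen_mem m hEM hσ hσ (Dom.refl σ))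
        (fst_comp_mem_pullbackFilt m hEM hσ hσ) (prod.snd ≫ m)
        (by rw [prod.lift_snd_assoc, pullback.condition])).symm)

theorem pullbackFiltLift_fst :
    pullbackFiltLift hQ s ≫ pullback.fst σ.2 m = hQ.lift (pullbackFiltCone s) :=
  pullback.lift_fst _ _ _

theorem pullbackFiltLift_snd :
    pullbackFiltLift hQ s ≫ pullback.snd σ.2 m =
      s.π.app (.mk _ (pullbackGen_mem m hEM hσ hσ (Dom.refl σ))) ≫ prod.snd :=
  pullback.lift_snd _ _ _

theorem pullbackFiltLift_comp_gen {δ : MorFrom X} (hδ : δ ∈ Q.carrier) (hδσ : Dom δ σ) :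
    pullbackFiltLift hQ s ≫ (pullbackGen σ m δ).2 =
      s.π.app (.mk _ (pullbackGen_mem m hEM hσ hδ hδσ)) := by
  obtain ⟨g, hg⟩ := hδσ
  apply prod.hom_ext
  · rw [Category.assoc, prod.lift_fst, ← Category.assoc, pullbackFiltLift_fst, hQ.fac _ ⟨δ, hδ⟩]
    exact (cone_π_comp s (pullbackGen_mem m hEM hσ hδ ⟨g, hg⟩)
      (fst_comp_mem_pullbackFilt m hEM hσ hδ) prod.fst
      (prod.lift_fst _ _)).symm
  · rw [Category.assoc, prod.lift_snd, pullbackFiltLift_snd,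
      ← cone_π_comp s (pullbackGen_mem m hEM hσ hδ ⟨g, hg⟩)
        (pullbackGen_mem m hEM hσ hσ (Dom.refl σ)) _ (pullbackGen_comp_map m hg),
      Category.assoc, prod.map_snd, Category.comp_id]

theorem pullbackFilt_isoFilt (hQiso : IsoFilt Q) : IsoFilt (pullbackFilt m hEM hσ) := by
  obtain ⟨hQ⟩ := hQiso
  refine ⟨{ lift := pullbackFiltLift hQ, fac := fun s => ?_, uniq := fun s l hl => ?_ }⟩
  · refine redFilt_fac hEM s ?_
    rintro _ ⟨δ, hδ, hδσ, rfl⟩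
    exact pullbackFiltLift_comp_gen hQ s hδ hδσ
  · apply pullback.hom_ext
    · rw [pullbackFiltLift_fst]
      refine hQ.hom_ext fun δ => ?_
      rw [hQ.fac, Category.assoc]
      exact hl (.mk _ (fst_comp_mem_pullbackFilt m hEM hσ δ.2))
    · rw [pullbackFiltLift_snd, ← hl (.mk _ (pullbackGen_mem m hEM hσ hσ (Dom.refl σ)))]
      simp only [filtCone, Category.assoc, prod.lift_snd]

end Pullback

noncomputable section PullbackKObj

variable [HasPullbacks D] [HasBinaryProducts D] (hEM : EMCat D) (C : KObj D)
  {σ : MorFrom C.base} (hσ : σ ∈ C.filt.carrier) {V : D} (m : V ⟶ σ.1)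

abbrev pullbackKObj : KObj D :=
  ⟨⟨⟨pullback σ.2 m, pullbackFilt m hEM hσ⟩, pullbackFilt_reduced m hEM hσ⟩,
    pullbackFilt_isoFilt (m := m) (hEM := hEM) (hσ := hσ) C.property⟩

def pullbackKObj.fst : pullbackKObj hEM C hσ m ⟶ C :=
  homMk (pullback.fst σ.2 m) fun _ hδ => fst_comp_mem_pullbackFilt m hEM hσ hδ

variable {C hσ m}

def pullbackKObj.lift {B : KObj D} (f : B ⟶ C) {e : B.base ⟶ V}
    (he : (⟨V, e⟩ : MorFrom B.base) ∈ B.filt.carrier) (w : hom f ≫ σ.2 = e ≫ m) :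
    B ⟶ pullbackKObj hEM C hσ m :=
  homMk (pullback.lift (hom f) e w) fun _ hr =>
    B.obj.property.comp_mem_of_mem_redSet hEM (by
      rintro _ ⟨δ, hδ, -, rfl⟩
      have h : pullback.lift (hom f) e w ≫ (pullbackGen σ m δ).2 =
          prod.lift (hom f ≫ δ.2) e := by
        rw [prod.comp_lift, pullback.lift_fst_assoc, pullback.lift_snd]
      exact B.filt.mem_of_eq (B.filt.prodLift_mem (hom_mem f hδ) he) h.symm) hr

end PullbackKObj

theorem ExtremalEpi.exists_dom_extremalEpi_hom_comp [HasPullbacks D] [HasBinaryProducts D]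
    (hEM : EMCat D) {B C : KObj D} {ρ : B ⟶ C} (hρ : ExtremalEpi ρ) {σ : MorFrom C.base}
    (hσ : σ ∈ C.filt.carrier) :
    ∃ (V : D) (s : C.base ⟶ V), (⟨V, s⟩ : MorFrom C.base) ∈ C.filt.carrier ∧
      Dom ⟨V, s⟩ σ ∧ ExtremalEpi (hom ρ ≫ s) := by
  obtain ⟨V, e, m, he, hm, hem⟩ := hEM.fact (hom ρ ≫ σ.2)
  have heB : (⟨V, e⟩ : MorFrom B.base) ∈ B.filt.carrier :=
    B.obj.property.mem_of_comp_mono hEM (hom_mem ρ hσ) hm hem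
  let ℓ := pullbackKObj.lift hEM (hσ := hσ) ρ heB hem.symm
  have hℓ : hom ℓ ≫ pullback.fst σ.2 m = hom ρ := pullback.lift_fst _ _ _
  have hfst : Mono (pullbackKObj.fst hEM C hσ m) :=
    mono_of_mono_hom _ (inferInstanceAs (Mono (pullback.fst σ.2 m)))
  -- `ρ` factors through the monomorphism `fst`, which is therefore an isomorphism
  obtain ⟨i, hfi, hif⟩ := (hρ.2 ℓ (pullbackKObj.fst hEM C hσ m) hfst (hom_ext hℓ)).out
  have hi₁ : pullback.fst σ.2 m ≫ hom i = 𝟙 _ := congrArg hom hfi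
  have hi₂ : hom i ≫ pullback.fst σ.2 m = 𝟙 _ := congrArg hom hif
  have hs : (hom i ≫ pullback.snd σ.2 m) ≫ m = σ.2 := by
    rw [Category.assoc, ← pullback.condition, ← Category.assoc, hi₂, Category.id_comp]
  refine ⟨V, _, C.obj.property.mem_of_comp_mono hEM hσ hm hs, ⟨m, hs⟩, ?_⟩
  have hρs : hom ρ ≫ hom i ≫ pullback.snd σ.2 m = e := by
    rw [← hℓ, Category.assoc, ← Category.assoc (pullback.fst σ.2 m), hi₁, Category.id_comp]
    exact pullback.lift_snd _ _ _
  rwa [hρs]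

section BaseFilt

variable {B : KObj D} (R : ProjFilt B)

def baseSet : Set (MorFrom B.base) :=
  {γ | ∃ h : γ ∈ B.filt.carrier, (⟨_, kToDiscrete γ h⟩ : MorFrom B) ∈ R.carrier}

variable {R}

theorem hom_comp_mem_baseSet {ρ : MorFrom B} (hρ : ρ ∈ R.carrier) {σ : MorFrom ρ.1.base}
    (hσ : σ ∈ ρ.1.filt.carrier) : (⟨σ.1, hom ρ.2 ≫ σ.2⟩ : MorFrom B.base) ∈ baseSet R :=
  ⟨hom_mem ρ.2 hσ, R.mem_of_dom hρ ⟨kToDiscrete σ hσ, hom_ext rfl⟩⟩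

variable (R)

def baseFilt : ProjFilt B.base where
  carrier := baseSet R
  nonempty' := by
    obtain ⟨ρ, hρ⟩ := R.nonempty'
    obtain ⟨σ, hσ⟩ := ρ.1.filt.nonempty'
    exact ⟨_, hom_comp_mem_baseSet hρ hσ⟩
  directed' := by
    rintro γ₁ ⟨_, hR₁⟩ γ₂ ⟨_, hR₂⟩
    obtain ⟨ρ, hρ, ⟨h₁, e₁⟩, ⟨h₂, e₂⟩⟩ := R.directed' _ hR₁ _ hR₂
    obtain ⟨σ, hσ, ⟨g₁, hg₁⟩, ⟨g₂, hg₂⟩⟩ :=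
      ρ.1.filt.directed' _ (mem_of_toDiscrete h₁) _ (mem_of_toDiscrete h₂)
    refine ⟨_, hom_comp_mem_baseSet hρ hσ, ⟨g₁, ?_⟩, ⟨g₂, ?_⟩⟩
    · rw [Category.assoc, hg₁]
      exact congrArg hom e₁
    · rw [Category.assoc, hg₂]
      exact congrArg hom e₂
  saturated' := by
    rintro γ ⟨hγ, hR⟩ γ' hγγ'
    have hγ' := B.filt.mem_of_dom hγ hγγ'
    exact ⟨hγ', R.mem_of_dom hR (dom_kToDiscrete hγ hγ' hγγ')⟩

variable {R}

theorem baseFilt_reduced [HasPullbacks D] [HasBinaryProducts D] (hEM : EMCat D)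
    (hR : R.Reduced) : (baseFilt R).Reduced := by
  rintro γ ⟨hγ, hγR⟩
  obtain ⟨ρ, hρ, hext, h, hh⟩ := hR _ hγR
  obtain ⟨V, s, hs, ⟨g, hg⟩, hext'⟩ :=
    hext.exists_dom_extremalEpi_hom_comp hEM (mem_of_toDiscrete h)
  refine ⟨_, hom_comp_mem_baseSet hρ hs, hext', g, ?_⟩
  rw [Category.assoc, hg]
  exact congrArg hom hh

section Cone

variable (s : Cone (FiltDiagram (baseFilt R)))

def baseFiltConeAt (j : FiltCat R) : Cone (FiltDiagram j.1.1.filt) where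
  pt := s.pt
  π.app σ := s.π.app (.mk _ (hom_comp_mem_baseSet j.2 σ.2))
  π.naturality σ σ' g := by
    simpa using (cone_π_comp s (hom_comp_mem_baseSet j.2 σ.2) (hom_comp_mem_baseSet j.2 σ'.2)
      g.1 (by rw [Category.assoc, g.2])).symm

noncomputable def baseFiltLiftAt (j : FiltCat R) : s.pt ⟶ j.1.1.base :=
  j.1.1.property.some.lift (baseFiltConeAt s j)

theorem baseFiltLiftAt_comp (j : FiltCat R) {σ : MorFrom j.1.1.base}
    (hσ : σ ∈ j.1.1.filt.carrier) :
    baseFiltLiftAt s j ≫ σ.2 = s.π.app (.mk _ (hom_comp_mem_baseSet j.2 hσ)) :=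
  j.1.1.property.some.fac _ (.mk σ hσ)

noncomputable def baseFiltConeForget : Cone (FiltDiagram R ⋙ Kforget D) where
  pt := s.pt
  π.app := baseFiltLiftAt s
  π.naturality j j' g := by
    refine j'.1.1.property.some.hom_ext fun σ => ?_
    show (𝟙 s.pt ≫ baseFiltLiftAt s j') ≫ σ.1.2 = (baseFiltLiftAt s j ≫ hom g.1) ≫ σ.1.2
    rw [Category.id_comp, Category.assoc, baseFiltLiftAt_comp s j' σ.2,
      baseFiltLiftAt_comp s j (hom_mem g.1 σ.2)]
    exact cone_π_congr s _ _ (by rw [← Category.assoc, ← KObj.hom_comp, g.2])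

end Cone

theorem baseFilt_isoFilt (hR : IsoFilt R) : IsoFilt (baseFilt R) := by
  obtain ⟨hR⟩ := hR
  have hRD := isLimitMapConeKforget hR
  refine ⟨⟨fun s => hRD.lift (baseFiltConeForget s), fun s γ => ?_,
    fun s l hl => hRD.uniq (baseFiltConeForget s) l fun j => ?_⟩⟩
  · obtain ⟨hγ, hγR⟩ := γ.2
    -- `Δ γ.1` is filtered by everything, in particular by its identity
    have h := baseFiltLiftAt_comp s (.mk _ hγR) (σ := ⟨γ.1.1, 𝟙 _⟩) trivial
    exact (hRD.fac _ (.mk _ hγR)).trans <| (Category.comp_id _).symm.trans <|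
      h.trans (cone_π_congr s _ γ.2 (Category.comp_id _))
  · refine j.1.1.property.some.hom_ext fun σ => ?_
    show (l ≫ hom j.1.2) ≫ σ.1.2 = baseFiltLiftAt s j ≫ σ.1.2
    rw [baseFiltLiftAt_comp s j σ.2, Category.assoc]
    exact hl (.mk _ (hom_comp_mem_baseSet j.2 σ.2))

end BaseFilt

section DiscreteMem

variable [HasPullbacks D] [HasBinaryProducts D] (hEM : EMCat D) {B : KObj D} {R : ProjFilt B}
  (hR : R.Reduced) (hRiso : IsoFilt R)

abbrev baseKObj : KObj D :=
  ⟨⟨⟨B.base, baseFilt R⟩, baseFilt_reduced hEM hR⟩, baseFilt_isoFilt hRiso⟩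

def baseKObjCone : Cone (FiltDiagram R) where
  pt := baseKObj hEM hR hRiso
  π.app j := homMk (A := baseKObj hEM hR hRiso) (show B.base ⟶ j.1.1.base from hom j.1.2)
    fun _ hσ => hom_comp_mem_baseSet j.2 hσ
  π.naturality _ _ g := hom_ext ((Category.id_comp _).trans (congrArg hom g.2).symm)

include hEM hR hRiso in
/-- The identity of `B.base` is the comparison map from the cone `(B.base, baseFilt R)` to the
limit `B` of `R`; being a morphism of `KD`, it shows that `baseFilt R` is finer than `B.filt`. -/
theorem filt_subset_baseSet : B.filt.carrier ⊆ baseSet R := by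
  have hRlim := hRiso.some
  let ℓ : baseKObj hEM hR hRiso ⟶ B := hRlim.lift (baseKObjCone hEM hR hRiso)
  have hℓ : hom ℓ = 𝟙 B.base := (isLimitMapConeKforget hRlim).hom_ext fun j =>
    (congrArg hom (hRlim.fac _ j)).trans (Category.id_comp _).symm
  intro γ hγ
  have h : (⟨γ.1, hom (A := baseKObj hEM hR hRiso) ℓ ≫ γ.2⟩ : MorFrom B.base) ∈ baseSet R :=
    hom_mem ℓ hγ
  rwa [hℓ, Category.id_comp] at h

include hEM hR hRiso in
theorem mem_of_reduced_of_isoFilt {Y : D} (t : B ⟶ kDiscreteObj Y) :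
    (⟨_, t⟩ : MorFrom B) ∈ R.carrier :=
  let ⟨_, ht⟩ := filt_subset_baseSet hEM hR hRiso (mem_of_toDiscrete t)
  R.mem_of_eq ht (hom_ext rfl)

end DiscreteMem

section Canonical

theorem kToDiscrete_mem_canonSat {A : KObj D} {δ : MorFrom A.base} (hδ : δ ∈ A.filt.carrier) :
    (⟨_, kToDiscrete δ hδ⟩ : MorFrom A) ∈ canonSat A :=
  ⟨_, ⟨δ, hδ, rfl⟩, Dom.refl _⟩

def canonFilt (A : KObj D) : ProjFilt A where
  carrier := canonSat A
  nonempty' := let ⟨_, hδ⟩ := A.filt.nonempty'; ⟨_, kToDiscrete_mem_canonSat hδ⟩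
  directed' := by
    rintro μ₁ ⟨_, ⟨δ₁, hδ₁, rfl⟩, hμ₁⟩ μ₂ ⟨_, ⟨δ₂, hδ₂, rfl⟩, hμ₂⟩
    obtain ⟨δ, hδ, h₁, h₂⟩ := A.filt.directed' δ₁ hδ₁ δ₂ hδ₂
    exact ⟨_, kToDiscrete_mem_canonSat hδ, (dom_kToDiscrete hδ hδ₁ h₁).trans hμ₁,
      (dom_kToDiscrete hδ hδ₂ h₂).trans hμ₂⟩
  saturated' := fun _ ⟨ν, hν, h⟩ _ h' => ⟨ν, hν, h.trans h'⟩

theorem canonFilt_reduced (A : KObj D) : (canonFilt A).Reduced := by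
  rintro μ ⟨_, ⟨δ, hδ, rfl⟩, hμ⟩
  obtain ⟨ε, hε, hext, hεδ⟩ := A.obj.property δ hδ
  exact ⟨_, kToDiscrete_mem_canonSat hε, kToDiscrete_extremalEpi hε hext,
    (dom_kToDiscrete hε hδ hεδ).trans hμ⟩

section Cone

variable {A : KObj D} (s : Cone (FiltDiagram (canonFilt A)))

def canonFiltConeBase : Cone (FiltDiagram A.filt) where
  pt := s.pt.base
  π.app δ := hom (s.π.app (.mk _ (kToDiscrete_mem_canonSat δ.2)))
  π.naturality δ δ' g := (Category.id_comp _).trans (congrArg hom (cone_π_comp s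
    (kToDiscrete_mem_canonSat δ.2) (kToDiscrete_mem_canonSat δ'.2) (ofDiscrete g.1)
    (hom_ext g.2))).symm

noncomputable def canonFiltLift : s.pt ⟶ A :=
  homMk (A.property.some.lift (canonFiltConeBase s)) fun γ hγ =>
    s.pt.filt.mem_of_eq (mem_of_toDiscrete (s.π.app (.mk _ (kToDiscrete_mem_canonSat hγ))))
      (A.property.some.fac (canonFiltConeBase s) (.mk γ hγ)).symm

theorem canonFiltLift_comp_kToDiscrete {δ : MorFrom A.base} (hδ : δ ∈ A.filt.carrier) :
    canonFiltLift s ≫ kToDiscrete δ hδ = s.π.app (.mk _ (kToDiscrete_mem_canonSat hδ)) :=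
  hom_ext (A.property.some.fac (canonFiltConeBase s) (.mk δ hδ))

end Cone

theorem canonFilt_isoFilt (A : KObj D) : IsoFilt (canonFilt A) := by
  refine ⟨⟨canonFiltLift, fun s j => ?_, fun s l hl => ?_⟩⟩
  · obtain ⟨_, ⟨δ, hδ, rfl⟩, h, hh⟩ := j.2
    show canonFiltLift s ≫ j.1.2 = s.π.app j
    rw [← hh, ← Category.assoc, canonFiltLift_comp_kToDiscrete]
    exact cone_π_comp s _ j.2 h hh
  · refine hom_ext (A.property.some.hom_ext fun δ => ?_)
    exact (congrArg hom (hl (.mk _ (kToDiscrete_mem_canonSat δ.2)))).trans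
      (congrArg hom (canonFiltLift_comp_kToDiscrete s δ.2)).symm

end Canonical

theorem comp_mem_canonSat {A B : KObj D} (f : A ⟶ B) {μ : MorFrom B} (hμ : μ ∈ canonSat B) :
    (⟨μ.1, f ≫ μ.2⟩ : MorFrom A) ∈ canonSat A := by
  obtain ⟨_, ⟨δ, hδ, rfl⟩, h, hh⟩ := hμ
  refine ⟨_, ⟨_, hom_mem f hδ, rfl⟩, h, ?_⟩
  rw [← hh, ← Category.assoc]
  exact congrArg (· ≫ h) (hom_ext rfl)

def canonFiltFunctor (D : Type u) [Category.{v} D] : KObj D ⥤ KObj (KObj D) where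
  obj A := ⟨⟨⟨A, canonFilt A⟩, canonFilt_reduced A⟩, canonFilt_isoFilt A⟩
  map f := homMk f fun _ hμ => comp_mem_canonSat f hμ
  map_id _ := hom_ext rfl
  map_comp _ _ := hom_ext rfl

theorem comp_mem_filt_of_mem_canonSat [HasPullbacks D] [HasBinaryProducts D] (hEM : EMCat D)
    (B : KObj (KObj D)) {A : KObj D} (f : B.base ⟶ A) {μ : MorFrom A} (hμ : μ ∈ canonSat A) :
    (⟨μ.1, f ≫ μ.2⟩ : MorFrom B.base) ∈ B.filt.carrier := by
  obtain ⟨_, ⟨δ, hδ, rfl⟩, h, hh⟩ := hμ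
  exact B.filt.mem_of_dom (mem_of_reduced_of_isoFilt hEM B.obj.property B.property
    (f ≫ kToDiscrete δ hδ)) ⟨h, by rw [Category.assoc, hh]⟩

def forgetAdjunctionCanonFiltFunctor [HasPullbacks D] [HasBinaryProducts D] (hEM : EMCat D) :
    Kforget (KObj D) ⊣ canonFiltFunctor D :=
  Adjunction.mkOfHomEquiv
    { homEquiv := fun B _ =>
        { toFun := fun f => homMk f fun _ hμ => comp_mem_filt_of_mem_canonSat hEM B f hμ
          invFun := hom
          left_inv := fun _ => rfl
          right_inv := fun _ => hom_ext rfl }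
      homEquiv_naturality_left_symm := fun _ _ => rfl
      homEquiv_naturality_right := fun _ _ => hom_ext rfl }

theorem canonical_filtration_functor_general [Limits.HasLimits D] (hEM : EMCat D) :
    (∀ A : KObj D, ∃ P : ProjFilt A,
      P.carrier = canonSat A ∧ P.Reduced ∧ IsoFilt P) ∧
    ∃ κ : KObj D ⥤ KObj (KObj D),
      κ ⋙ Kforget (KObj D) = 𝟭 (KObj D) ∧
      Nonempty (Kforget (KObj D) ⊣ κ) ∧
      ∀ A : KObj D, ∃ h : (κ.obj A).obj.obj.base = A,
        (κ.obj A).obj.obj.filt.carrier =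
          {μ : MorFrom ((κ.obj A).obj.obj.base) |
            (⟨μ.1, eqToHom h.symm ≫ μ.2⟩ : MorFrom A) ∈ canonSat A} := by
  refine ⟨fun A => ⟨canonFilt A, rfl, canonFilt_reduced A, canonFilt_isoFilt A⟩,
    canonFiltFunctor D, rfl, ⟨forgetAdjunctionCanonFiltFunctor hEM⟩, fun A => ⟨rfl, ?_⟩⟩
  show canonSat A = {μ : MorFrom A | (⟨μ.1, 𝟙 A ≫ μ.2⟩ : MorFrom A) ∈ canonSat A}
  simp only [Category.id_comp]
  rfl

/-- for each iso-filtered object `A = (X, Q)` of `KD`, the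
projective filtration on the `KD`-object `A` generated by the `KD`-morphisms
`A → Δ(X_δ)` for `δ ∈ Q` is a reduced iso-filtration in `KD`; the resulting
canonical filtration functor `κ : KD → K(KD)` is both a right inverse and a
right adjoint to the forgetful functor `K(KD) → KD`. -/
theorem canonical_filtration_functor [Limits.HasLimits D] [Limits.HasColimits D]
    (hecwp : ECWP D) (hEM : EMCat D) :
    (∀ A : KObj D, ∃ P : ProjFilt A,
      P.carrier = canonSat A ∧ P.Reduced ∧ IsoFilt P) ∧
    ∃ κ : KObj D ⥤ KObj (KObj D),
      κ ⋙ Kforget (KObj D) = 𝟭 (KObj D) ∧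
      Nonempty (Kforget (KObj D) ⊣ κ) ∧
      ∀ A : KObj D, ∃ h : (κ.obj A).obj.obj.base = A,
        (κ.obj A).obj.obj.filt.carrier =
          {μ : MorFrom ((κ.obj A).obj.obj.base) |
            (⟨μ.1, eqToHom h.symm ≫ μ.2⟩ : MorFrom A) ∈ canonSat A} :=
  canonical_filtration_functor_general hEM

end FilteredCats
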